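/- arXiv:2305.00638 — 5 statements merged into one kernel-verified Lean document; each statement's English description precedes it below -/
import Mathlib

section
/- For every real number t > 0, one has arsinh(1/sinh(t/2)) ≥ log(4/t), where arsinh is the inverse hyperbolic sine and log is the natural logarithm. -/
lemma sinh_le_mul_cosh (v : ℝ) (hv : 0 ≤ v) : Real.sinh v ≤ v * Real.cosh v := by
  have h : MonotoneOn (fun v : ℝ => v * Real.cosh v - Real.sinh v) (Set.Ici 0) := by
    apply monotoneOn_of_deriv_nonneg (convex_Ici 0)
    · fun_prop
    · intro x hx
      exact (((differentiable_id.mul Real.differentiable_cosh).sub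
        Real.differentiable_sinh) x).differentiableWithinAt
    · intro x hx
      simp only [interior_Ici, Set.mem_Ioi] at hx
      have : deriv (fun v : ℝ => v * Real.cosh v - Real.sinh v) x = x * Real.sinh x := by
        rw [deriv_fun_sub, deriv_fun_mul] <;>
          simp [Real.deriv_cosh, Real.deriv_sinh]
      rw [this]
      exact mul_nonneg hx.le (Real.sinh_nonneg_iff.2 hx.le)
  have := h (Set.self_mem_Ici) (Set.mem_Ici.2 hv) hv
  simp at this
  linarith

theorem collar_containment (t : ℝ) (ht : 0 < t) :
    Real.arsinh (1 / Real.sinh (t / 2)) ≥ Real.log (4 / t) := by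
  set v : ℝ := t / 4 with hv
  have hv0 : 0 < v := by positivity
  have hsv : 0 < Real.sinh v := Real.sinh_pos_iff.2 hv0
  have hcv : 0 < Real.cosh v := Real.cosh_pos v
  have hu : t / 2 = 2 * v := by rw [hv]; ring
  have hsu : Real.sinh (t / 2) = 2 * Real.sinh v * Real.cosh v := by
    rw [hu, Real.sinh_two_mul]
  have hcu : Real.cosh (t / 2) = 2 * Real.cosh v ^ 2 - 1 := by
    rw [hu, Real.cosh_two_mul]; linarith [Real.cosh_sq v]
  have hs : 0 < Real.sinh (t / 2) := by rw [hsu]; positivity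
  set x : ℝ := 1 / Real.sinh (t / 2) with hx
  have hsq : Real.sqrt (1 + x ^ 2) = Real.cosh (t / 2) / Real.sinh (t / 2) := by
    have h1 : 1 + x ^ 2 = (Real.cosh (t / 2) / Real.sinh (t / 2)) ^ 2 := by
      have := Real.cosh_sq (t / 2)
      field_simp [hx]
      have hxs : x * Real.sinh (t / 2) = 1 := by rw [hx, one_div, inv_mul_cancel₀ hs.ne']
      linear_combination (x * Real.sinh (t / 2) + 1) * hxs - this
    rw [h1, Real.sqrt_sq (by positivity)]
  rw [Real.arsinh, hsq, ge_iff_le]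
  have hkey : 4 / t ≤ x + Real.cosh (t / 2) / Real.sinh (t / 2) := by
    have h4t : 4 / t = 1 / v := by rw [hv]; field_simp
    have hexpr : x + Real.cosh (t / 2) / Real.sinh (t / 2) = Real.cosh v / Real.sinh v := by
      rw [hx, hsu, hcu]
      field_simp
      ring
    rw [h4t, hexpr, div_le_div_iff₀ hv0 hsv, one_mul]
    linarith [sinh_le_mul_cosh v hv0.le]
  exact Real.log_le_log (by positivity) hkey
end

section
/- Let a, b₁, b₂ be real numbers with −1 ≤ b₁ < b₂ ≤ 1, b₁ + b₂ > 0, a > 0, and (1 + (b₂ − b₁)/2)² = ((b₂ + b₁)/2)² + a². Then (1/a − a/4) · (2a/(b₂ + b₁)) = 1 + (3 − b₁)(1 − b₂)/(2(b₂ + b₁)), and in particular (1/a − a/4) · (2a/(b₂ + b₁)) ≥ 1. -/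
theorem pants_disjoint_identity (a b₁ b₂ : ℝ)
    (hb₁ : -1 ≤ b₁) (hb₁₂ : b₁ < b₂) (hb₂ : b₂ ≤ 1)
    (hsum : 0 < b₁ + b₂) (ha : 0 < a)
    (hrel : (1 + (b₂ - b₁) / 2) ^ 2 = ((b₂ + b₁) / 2) ^ 2 + a ^ 2) :
    (1 / a - a / 4) * (2 * a / (b₂ + b₁)) = 1 + (3 - b₁) * (1 - b₂) / (2 * (b₂ + b₁)) ∧
    (1 / a - a / 4) * (2 * a / (b₂ + b₁)) ≥ 1 := by
  have h1 : (1 / a - a / 4) * (2 * a / (b₂ + b₁)) = 1 + (3 - b₁) * (1 - b₂) / (2 * (b₂ + b₁)) := by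
    have ha' : a ≠ 0 := ha.ne'
    have hs' : b₂ + b₁ ≠ 0 := by linarith
    field_simp
    linear_combination 4 * hrel
  refine ⟨h1, ?_⟩
  rw [h1]
  have : (3 - b₁) * (1 - b₂) / (2 * (b₂ + b₁)) ≥ 0 := by
    apply div_nonneg <;> nlinarith
  linarith
end

section
/- Let m₀ ≥ 1 and m₂ ≥ 0 be natural numbers, set m = m₀ + m₂, and let L > 0 be real. Define D : ℝ^{m₀} → ℝ by D(x₁, …, x_{m₀}) = Σ_{j=1}^{m₀} (2m + 1 − 2j)·sinh(x_j), and let A = { (x₁, …, x_{m₀}) : 0 ≤ x₁ ≤ x₂ ≤ ⋯ ≤ x_{m₀} and x₁ + ⋯ + x_{m₀} = L }. If x' ∈ A satisfies D(x') ≥ D(x) for all x ∈ A, then there exists an integer m₁ with 1 ≤ m₁ ≤ m₀ such that x'_j = 0 for all j ≤ m₀ − m₁ and x'_j = L/m₁ for all j > m₀ − m₁. -/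
open Finset Real in
lemma key_claim (m₀ : ℕ) (c : Fin m₀ → ℝ) (hc : ∀ k, 0 < c k) (L : ℝ)
    (x' : Fin m₀ → ℝ) (h0 : ∀ i, 0 ≤ x' i) (hmono : ∀ i j : Fin m₀, i ≤ j → x' i ≤ x' j)
    (hsum : ∑ i, x' i = L)
    (hmax : ∀ x : Fin m₀ → ℝ, (∀ i, 0 ≤ x i) → (∀ i j : Fin m₀, i ≤ j → x i ≤ x j) →
      (∑ i, x i = L) → ∑ k, c k * Real.sinh (x k) ≤ ∑ k, c k * Real.sinh (x' k)) :
    ∀ i j : Fin m₀, 0 < x' i → 0 < x' j → x' i = x' j := by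
  by_contra hcon
  push_neg at hcon
  obtain ⟨i0, j0, hi0, hj0, hij0⟩ := hcon
  obtain ⟨i, j, hi, hlt⟩ : ∃ i j : Fin m₀, 0 < x' i ∧ x' i < x' j := by
    rcases hij0.lt_or_gt with h' | h'
    · exact ⟨i0, j0, hi0, h'⟩
    · exact ⟨j0, i0, hj0, h'⟩
  classical
  -- minimum positive value
  set P : Finset (Fin m₀) := univ.filter (fun k => 0 < x' k) with hP
  clear_value P
  have hPne : P.Nonempty := ⟨i, by rw [hP, Finset.mem_filter]; exact ⟨mem_univ _, hi⟩⟩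
  obtain ⟨kt, hktP, hkt⟩ := P.exists_min_image x' hPne
  obtain ⟨ks, -, hks⟩ := univ.exists_max_image x' ⟨i, mem_univ i⟩
  set t : ℝ := x' kt with htdef
  clear_value t
  set s : ℝ := x' ks with hsdef
  clear_value s
  have ht : 0 < t := by
    rw [hP, Finset.mem_filter] at hktP
    rw [htdef]; exact hktP.2
  have hiP : i ∈ P := by rw [hP, Finset.mem_filter]; exact ⟨mem_univ _, hi⟩
  have hts : t < s :=
    lt_of_le_of_lt (hkt i hiP) (lt_of_lt_of_le hlt (hsdef ▸ hks j (mem_univ j)))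
  have htne : t ≠ s := ne_of_lt hts
  have hsmax : ∀ k, x' k ≤ s := fun k => hsdef ▸ hks k (mem_univ k)
  -- minimum gap
  set G : Finset (Fin m₀ × Fin m₀) :=
    (univ ×ˢ univ).filter (fun p => x' p.1 < x' p.2) with hG
  clear_value G
  have hGne : G.Nonempty := by
    refine ⟨(i, j), ?_⟩
    rw [hG, Finset.mem_filter]
    exact ⟨Finset.mem_product.2 ⟨mem_univ _, mem_univ _⟩, hlt⟩
  set g : ℝ := G.inf' hGne (fun p => x' p.2 - x' p.1) with hgdef
  clear_value g
  have hgpos : 0 < g := by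
    rw [hgdef, Finset.lt_inf'_iff]
    intro p hp
    rw [hG, Finset.mem_filter] at hp
    linarith [hp.2]
  have hgap : ∀ k l : Fin m₀, x' k < x' l → g ≤ x' l - x' k := by
    intro k l hkl
    rw [hgdef]
    have hmem : (k, l) ∈ G := by
      rw [hG, Finset.mem_filter]
      exact ⟨Finset.mem_product.2 ⟨mem_univ _, mem_univ _⟩, hkl⟩
    exact Finset.inf'_le _ hmem
  -- blocks
  set B1 : Finset (Fin m₀) := univ.filter (fun k => x' k = t) with hB1
  clear_value B1
  set B2 : Finset (Fin m₀) := univ.filter (fun k => x' k = s) with hB2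
  clear_value B2
  set p : ℕ := B1.card with hpdef
  clear_value p
  set q : ℕ := B2.card with hqdef
  clear_value q
  have hppos : 0 < p := by
    rw [hpdef]
    exact Finset.card_pos.2 ⟨kt, by rw [hB1, Finset.mem_filter]; exact ⟨mem_univ _, htdef.symm⟩⟩
  have hqpos : 0 < q := by
    rw [hqdef]
    exact Finset.card_pos.2 ⟨ks, by rw [hB2, Finset.mem_filter]; exact ⟨mem_univ _, hsdef.symm⟩⟩
  set ε : ℝ := min g t / (2 * (p + q)) with hεdef
  clear_value ε
  have hppos' : (0:ℝ) < p := by exact_mod_cast hppos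
  have hqpos' : (0:ℝ) < q := by exact_mod_cast hqpos
  have hεpos : 0 < ε := by
    rw [hεdef]
    apply div_pos (lt_min hgpos ht)
    positivity
  have hpq : ((p:ℝ) + q) * ε ≤ min g t := by
    rw [hεdef, mul_div_assoc']
    rw [div_le_iff₀ (by positivity)]
    have h1 : (0:ℝ) ≤ min g t := le_of_lt (lt_min hgpos ht)
    have h2 : (1:ℝ) ≤ (p:ℝ) + q := by
      have h3 : (1:ℝ) ≤ (p:ℝ) := by exact_mod_cast hppos
      linarith
    nlinarith
  set δ : ℝ := q * ε with hδdef
  clear_value δ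
  set η : ℝ := p * ε with hηdef
  clear_value η
  have hδpos : 0 < δ := by rw [hδdef]; positivity
  have hηpos : 0 < η := by rw [hηdef]; positivity
  have hmin_g : min g t ≤ g := min_le_left _ _
  have hmin_t : min g t ≤ t := min_le_right _ _
  have hδηsum : δ + η = ((p:ℝ) + q) * ε := by rw [hδdef, hηdef]; ring
  have hδη_g : δ + η ≤ g := by linarith
  have hδη_t : δ + η ≤ t := by linarith
  have hδg : δ ≤ g := by linarith
  have hηg : η ≤ g := by linarith
  have hδt : δ ≤ t := by linarith
  have hηt : η ≤ t := by linarith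
  -- perturbed points
  set a : Fin m₀ → ℝ :=
    fun k => if x' k = t then x' k - δ else if x' k = s then x' k + η else x' k with ha
  clear_value a
  set b : Fin m₀ → ℝ :=
    fun k => if x' k = t then x' k + δ else if x' k = s then x' k - η else x' k with hb
  clear_value b
  have ha0 : ∀ k, 0 ≤ a k := by
    intro k
    simp only [ha]
    split_ifs with h1 h2
    · rw [h1]; linarith
    · linarith [h0 k]
    · exact h0 k
  have hb0 : ∀ k, 0 ≤ b k := by
    intro k
    simp only [hb]
    split_ifs with h1 h2
    · linarith [h0 k]
    · rw [h2]; linarith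
    · exact h0 k
  have hamono : ∀ k l : Fin m₀, k ≤ l → a k ≤ a l := by
    intro k l hkl
    have hle := hmono k l hkl
    rcases eq_or_lt_of_le hle with heq | hlt'
    · simp only [ha]; rw [heq]
    · have hgapkl := hgap k l hlt'
      have hsl := hsmax l
      have hsk := hsmax k
      simp only [ha]
      split_ifs <;> linarith
  have hbmono : ∀ k l : Fin m₀, k ≤ l → b k ≤ b l := by
    intro k l hkl
    have hle := hmono k l hkl
    rcases eq_or_lt_of_le hle with heq | hlt'
    · simp only [hb]; rw [heq]
    · have hgapkl := hgap k l hlt'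
      have hsl := hsmax l
      have hsk := hsmax k
      simp only [hb]
      split_ifs <;> linarith
  -- sums
  have hsum_split : ∀ d e : ℝ,
      ∑ k, (if x' k = t then x' k + d else if x' k = s then x' k + e else x' k)
        = L + p * d + q * e := by
    intro d e
    have step1 : ∀ k : Fin m₀,
        (if x' k = t then x' k + d else if x' k = s then x' k + e else x' k)
          = x' k + ((if x' k = t then d else 0) + (if x' k = s then e else 0)) := by
      intro k
      split_ifs with h1 h2 <;> first
        | (exfalso; exact htne (h1 ▸ h2 ▸ rfl))
        | ring
    rw [Finset.sum_congr rfl (fun k _ => step1 k)]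
    rw [Finset.sum_add_distrib, Finset.sum_add_distrib, hsum]
    rw [← Finset.sum_filter, ← Finset.sum_filter]
    rw [Finset.sum_const, Finset.sum_const]
    rw [hpdef, hqdef, hB1, hB2]
    simp only [nsmul_eq_mul]
    ring
  have hsuma : ∑ k, a k = L := by
    simp only [ha]
    have h2 : ∀ k : Fin m₀, (if x' k = t then x' k - δ else if x' k = s then x' k + η else x' k)
        = (if x' k = t then x' k + (-δ) else if x' k = s then x' k + η else x' k) := by
      intro k; split_ifs <;> ring
    rw [Finset.sum_congr rfl (fun k _ => h2 k), hsum_split (-δ) η]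
    rw [hδdef, hηdef]; ring
  have hsumb : ∑ k, b k = L := by
    simp only [hb]
    have h2 : ∀ k : Fin m₀, (if x' k = t then x' k + δ else if x' k = s then x' k - η else x' k)
        = (if x' k = t then x' k + δ else if x' k = s then x' k + (-η) else x' k) := by
      intro k; split_ifs <;> ring
    rw [Finset.sum_congr rfl (fun k _ => h2 k), hsum_split δ (-η)]
    rw [hδdef, hηdef]; ring
  have hDa := hmax a ha0 hamono hsuma
  have hDb := hmax b hb0 hbmono hsumb
  -- strict convexity contradiction
  have hkey : ∑ k, (2 * (c k * Real.sinh (x' k))) <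
      ∑ k, (c k * Real.sinh (a k) + c k * Real.sinh (b k)) := by
    apply Finset.sum_lt_sum
    · intro k _
      simp only [ha, hb]
      split_ifs with h1 h2
      · have key2 : c k * Real.sinh (x' k - δ) + c k * Real.sinh (x' k + δ)
            = 2 * (c k * Real.sinh (x' k))
              + (2 * (c k * Real.sinh (x' k))) * (Real.cosh δ - 1) := by
          rw [Real.sinh_sub, Real.sinh_add]; ring
        have h1' : 0 < Real.sinh (x' k) := Real.sinh_pos_iff.2 (by rw [h1]; exact ht)
        have hcosh := Real.one_le_cosh δ
        have hpos2 : 0 < 2 * (c k * Real.sinh (x' k)) :=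
          mul_pos two_pos (mul_pos (hc k) h1')
        have hnn := mul_nonneg hpos2.le (sub_nonneg.2 hcosh)
        linarith [key2, hnn]
      · have key2 : c k * Real.sinh (x' k + η) + c k * Real.sinh (x' k - η)
            = 2 * (c k * Real.sinh (x' k))
              + (2 * (c k * Real.sinh (x' k))) * (Real.cosh η - 1) := by
          rw [Real.sinh_sub, Real.sinh_add]; ring
        have h1' : 0 < Real.sinh (x' k) :=
          Real.sinh_pos_iff.2 (by rw [h2]; exact ht.trans hts)
        have hcosh := Real.one_le_cosh η
        have hpos2 : 0 < 2 * (c k * Real.sinh (x' k)) :=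
          mul_pos two_pos (mul_pos (hc k) h1')
        have hnn := mul_nonneg hpos2.le (sub_nonneg.2 hcosh)
        linarith [key2, hnn]
      · exact le_of_eq (by ring)
    · refine ⟨kt, mem_univ kt, ?_⟩
      simp only [ha, hb]
      rw [if_pos htdef.symm, if_pos htdef.symm]
      have key2 : c kt * Real.sinh (x' kt - δ) + c kt * Real.sinh (x' kt + δ)
          = 2 * (c kt * Real.sinh (x' kt))
            + (2 * (c kt * Real.sinh (x' kt))) * (Real.cosh δ - 1) := by
        rw [Real.sinh_sub, Real.sinh_add]; ring
      have h1' : 0 < Real.sinh (x' kt) := Real.sinh_pos_iff.2 (by rw [← htdef]; exact ht)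
      have hcosh : 1 < Real.cosh δ := Real.one_lt_cosh.2 (ne_of_gt hδpos)
      have hpos2 : 0 < 2 * (c kt * Real.sinh (x' kt)) :=
        mul_pos two_pos (mul_pos (hc kt) h1')
      have hnn := mul_pos hpos2 (sub_pos.2 hcosh)
      linarith [key2, hnn]
  rw [Finset.sum_add_distrib] at hkey
  rw [← Finset.mul_sum] at hkey
  linarith

open Finset in
theorem maximizer_structure (m₀ m₂ : ℕ) (hm₀ : 1 ≤ m₀) (L : ℝ) (hL : 0 < L)
    (m : ℕ) (hm : m = m₀ + m₂)
    (D : (Fin m₀ → ℝ) → ℝ)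
    (hD : D = fun x => ∑ j : Fin m₀,
      (2 * (m : ℝ) + 1 - 2 * ((j : ℕ) + 1)) * Real.sinh (x j))
    (A : Set (Fin m₀ → ℝ))
    (hA : A = {x | (∀ i : Fin m₀, 0 ≤ x i) ∧
      (∀ i j : Fin m₀, i ≤ j → x i ≤ x j) ∧ (∑ i : Fin m₀, x i = L)})
    (x' : Fin m₀ → ℝ) (hx' : x' ∈ A) (hmax : ∀ x ∈ A, D x ≤ D x') :
    ∃ m₁ : ℕ, 1 ≤ m₁ ∧ m₁ ≤ m₀ ∧
      ∀ j : Fin m₀,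
        (((j : ℕ) + 1 ≤ m₀ - m₁) → x' j = 0) ∧
        ((m₀ - m₁ < (j : ℕ) + 1) → x' j = L / (m₁ : ℝ)) := by
  subst hm hD hA
  simp only [Set.mem_setOf_eq] at hx' hmax
  obtain ⟨h0, hmono, hsum⟩ := hx'
  have hc : ∀ k : Fin m₀, (0:ℝ) < 2 * ((m₀ + m₂ : ℕ) : ℝ) + 1 - 2 * ((k : ℕ) + 1) := by
    intro k
    have hk : (k : ℕ) < m₀ := k.isLt
    have hk' : ((k : ℕ) : ℝ) + 1 ≤ (m₀ : ℝ) := by exact_mod_cast hk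
    have hm' : (m₀ : ℝ) ≤ ((m₀ + m₂ : ℕ) : ℝ) := by push_cast; linarith
    linarith
  have hC : ∀ i j : Fin m₀, 0 < x' i → 0 < x' j → x' i = x' j := by
    refine key_claim m₀ (fun k => 2 * ((m₀ + m₂ : ℕ) : ℝ) + 1 - 2 * ((k : ℕ) + 1)) hc L x'
      h0 hmono hsum ?_
    intro x hx1 hx2 hx3
    exact hmax x ⟨hx1, hx2, hx3⟩
  classical
  set P : Finset (Fin m₀) := univ.filter (fun k => 0 < x' k) with hP
  have hex : ∃ i, 0 < x' i := by
    by_contra hno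
    push_neg at hno
    have : ∑ i : Fin m₀, x' i = 0 :=
      Finset.sum_eq_zero (fun i _ => le_antisymm (hno i) (h0 i))
    rw [hsum] at this
    linarith
  obtain ⟨i₀, hi₀⟩ := hex
  have hm₁pos : 0 < P.card := Finset.card_pos.2 ⟨i₀, by simp [hP, hi₀]⟩
  have hm₁le : P.card ≤ m₀ := by
    calc P.card ≤ (univ : Finset (Fin m₀)).card := Finset.card_filter_le _ _
    _ = m₀ := by simp
  refine ⟨P.card, hm₁pos, hm₁le, ?_⟩
  intro j
  constructor
  · intro hj
    by_contra hne
    have hpos : 0 < x' j := lt_of_le_of_ne (h0 j) (Ne.symm hne)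
    have hsub : Finset.Ici j ⊆ P := by
      intro i hi
      simp only [hP, Finset.mem_filter]
      exact ⟨mem_univ _, lt_of_lt_of_le hpos (hmono j i (Finset.mem_Ici.1 hi))⟩
    have hcard : m₀ - (j : ℕ) ≤ P.card := by
      have := Finset.card_le_card hsub
      rwa [Fin.card_Ici] at this
    have hjlt : (j : ℕ) < m₀ := j.isLt
    omega
  · intro hj
    have hpos : 0 < x' j := by
      by_contra hnp
      have hj0 : x' j = 0 := le_antisymm (not_lt.1 hnp) (h0 j)
      have hsub : P ⊆ univ \ Finset.Iic j := by
        intro i hi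
        simp only [hP, Finset.mem_filter] at hi
        rw [Finset.mem_sdiff]
        refine ⟨mem_univ _, fun hmem => ?_⟩
        have := hmono i j (Finset.mem_Iic.1 hmem)
        rw [hj0] at this
        linarith [hi.2]
      have hcard := Finset.card_le_card hsub
      rw [Finset.card_sdiff_of_subset (Finset.subset_univ _), Fin.card_Iic] at hcard
      simp only [Finset.card_univ, Fintype.card_fin] at hcard
      have hjlt : (j : ℕ) < m₀ := j.isLt
      omega
    have hall : ∀ i ∈ P, x' i = x' j := by
      intro i hi
      simp only [hP, Finset.mem_filter] at hi
      exact hC i j hi.2 hpos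
    have hsum2 : ∑ i ∈ P, x' i = L := by
      rw [← hsum]
      apply Finset.sum_subset (Finset.subset_univ P)
      intro i _ hiP
      simp only [hP, Finset.mem_filter, mem_univ, true_and, not_lt] at hiP
      exact le_antisymm hiP (h0 i)
    have hconst : ∑ i ∈ P, x' i = (P.card : ℝ) * x' j := by
      rw [Finset.sum_congr rfl hall, Finset.sum_const, nsmul_eq_mul]
    rw [hconst] at hsum2
    have hne0 : (P.card : ℝ) ≠ 0 := by exact_mod_cast hm₁pos.ne'
    rw [eq_div_iff hne0]
    linarith [hsum2]
end

section
/- For all real numbers x and a with x ≥ 2 and a ≥ 2x·log 2, one has (x − 1)·exp(a/(2x)) ≤ 2·exp(a/4). -/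
theorem special_case_exp_bound (x a : ℝ) (hx : 2 ≤ x) (ha : 2 * x * Real.log 2 ≤ a) :
    (x - 1) * Real.exp (a / (2 * x)) ≤ 2 * Real.exp (a / 4) := by
  have hl : (0.6931471803 : ℝ) < Real.log 2 := Real.log_two_gt_d9
  have hl1 : Real.log 2 < 1 := by
    have := Real.log_two_lt_d9; linarith
  have hx0 : (0:ℝ) < x := by linarith
  set t : ℝ := Real.log 2 * (x - 2) / 2 with ht_def
  have ht0 : 0 ≤ t := by
    apply div_nonneg _ (by norm_num)
    exact mul_nonneg (by linarith) (by linarith)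
  have h1 : a / 4 - a / (2 * x) = a * (x - 2) / (4 * x) := by
    field_simp; ring
  have h2 : t ≤ a / 4 - a / (2 * x) := by
    rw [h1, ht_def, div_le_div_iff₀ (by norm_num) (by positivity)]
    nlinarith [mul_nonneg (sub_nonneg.2 ha) (sub_nonneg.2 hx)]
  have hpoly : x - 1 ≤ 2 * (1 + t / 2) ^ 2 := by
    rw [ht_def]
    nlinarith [sq_nonneg (Real.log 2 * (x - 2) - 4 * (1 - Real.log 2)), sq_nonneg (x - 2),
      mul_nonneg (mul_nonneg (by linarith : (0:ℝ) ≤ Real.log 2) (by linarith : (0:ℝ) ≤ Real.log 2)) (sq_nonneg (x - 2))]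
  have hsq : (1 + t / 2) ^ 2 ≤ Real.exp t := by
    have h3 : 1 + t / 2 ≤ Real.exp (t / 2) := by linarith [Real.add_one_le_exp (t / 2)]
    calc (1 + t / 2) ^ 2 ≤ Real.exp (t / 2) ^ 2 := by
          apply pow_le_pow_left₀ (by linarith) h3
      _ = Real.exp t := by rw [← Real.exp_nat_mul]; push_cast; ring
  have hexp : Real.exp t * Real.exp (a / (2 * x)) ≤ Real.exp (a / 4) := by
    rw [← Real.exp_add]
    exact Real.exp_le_exp.2 (by linarith)
  have hpos : 0 < Real.exp (a / (2 * x)) := Real.exp_pos _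
  calc (x - 1) * Real.exp (a / (2 * x))
      ≤ 2 * (1 + t / 2) ^ 2 * Real.exp (a / (2 * x)) := by
        exact mul_le_mul_of_nonneg_right hpoly hpos.le
    _ ≤ 2 * Real.exp t * Real.exp (a / (2 * x)) := by
        have := mul_le_mul_of_nonneg_left hsq (by norm_num : (0:ℝ) ≤ 2)
        exact mul_le_mul_of_nonneg_right this hpos.le
    _ = 2 * (Real.exp t * Real.exp (a / (2 * x))) := by ring
    _ ≤ 2 * Real.exp (a / 4) := by linarith [hexp]
end

section
/- For every real number L ≥ 16.7, the function x ↦ (x² + L)/2^{x/2} is convex on the interval [2, ∞). -/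
open Real

private lemma hasDerivAt_aux1 (L : ℝ) (x : ℝ) :
    HasDerivAt (fun x : ℝ => (x ^ 2 + L) * Real.exp (-(Real.log 2 / 2 * x)))
      ((2 * x - Real.log 2 / 2 * (x ^ 2 + L)) * Real.exp (-(Real.log 2 / 2 * x))) x := by
  set c := Real.log 2 / 2
  have h1 : HasDerivAt (fun x : ℝ => x ^ 2 + L) (2 * x) x := by
    simpa using ((hasDerivAt_pow 2 x).add_const L)
  have h2 : HasDerivAt (fun x : ℝ => Real.exp (-(c * x))) (-c * Real.exp (-(c * x))) x := by
    have : HasDerivAt (fun x : ℝ => -(c * x)) (-c) x := by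
      exact ((hasDerivAt_id x).const_mul c).neg.congr_deriv (by simp)
    simpa [mul_comm] using this.exp
  have := h1.mul h2
  exact this.congr_deriv (by ring)

private lemma hasDerivAt_aux2 (L : ℝ) (x : ℝ) :
    HasDerivAt (fun x : ℝ => (2 * x - Real.log 2 / 2 * (x ^ 2 + L)) * Real.exp (-(Real.log 2 / 2 * x)))
      ((2 - Real.log 2 / 2 * (2 * x) - Real.log 2 / 2 * (2 * x - Real.log 2 / 2 * (x ^ 2 + L)))
        * Real.exp (-(Real.log 2 / 2 * x))) x := by
  set c := Real.log 2 / 2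
  have h1 : HasDerivAt (fun x : ℝ => 2 * x - c * (x ^ 2 + L)) (2 - c * (2 * x)) x := by
    have ha : HasDerivAt (fun x : ℝ => 2 * x) 2 x := by
      simpa using (hasDerivAt_id x).const_mul 2
    have hb : HasDerivAt (fun x : ℝ => c * (x ^ 2 + L)) (c * (2 * x)) x := by
      have : HasDerivAt (fun x : ℝ => x ^ 2 + L) (2 * x) x := by
        simpa using ((hasDerivAt_pow 2 x).add_const L)
      exact this.const_mul c
    exact ha.sub hb
  have h2 : HasDerivAt (fun x : ℝ => Real.exp (-(c * x))) (-c * Real.exp (-(c * x))) x := by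
    have : HasDerivAt (fun x : ℝ => -(c * x)) (-c) x := by
      exact ((hasDerivAt_id x).const_mul c).neg.congr_deriv (by simp)
    simpa [mul_comm] using this.exp
  have := h1.mul h2
  exact this.congr_deriv (by ring)

theorem convexOn_sq_add_div_two_rpow (L : ℝ) (hL : 16.7 ≤ L) :
    ConvexOn ℝ (Set.Ici (2 : ℝ)) (fun x => (x ^ 2 + L) / (2 : ℝ) ^ (x / 2)) := by
  have hfun : (fun x : ℝ => (x ^ 2 + L) / (2 : ℝ) ^ (x / 2))
      = fun x : ℝ => (x ^ 2 + L) * Real.exp (-(Real.log 2 / 2 * x)) := by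
    funext x
    rw [Real.rpow_def_of_pos (by norm_num : (0:ℝ) < 2), div_eq_mul_inv, ← Real.exp_neg]
    ring_nf
  rw [hfun]
  set c := Real.log 2 / 2 with hc
  have hderiv : deriv (fun x : ℝ => (x ^ 2 + L) * Real.exp (-(c * x)))
      = fun x => (2 * x - c * (x ^ 2 + L)) * Real.exp (-(c * x)) := by
    funext x
    exact (hasDerivAt_aux1 L x).deriv
  apply convexOn_of_deriv2_nonneg (convex_Ici 2)
  · exact Continuous.continuousOn (by continuity)
  · intro x hx
    exact (hasDerivAt_aux1 L x).differentiableAt.differentiableWithinAt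
  · intro x hx
    rw [hderiv]
    exact (hasDerivAt_aux2 L x).differentiableAt.differentiableWithinAt
  · intro x hx
    have h2 : deriv (deriv (fun x : ℝ => (x ^ 2 + L) * Real.exp (-(c * x)))) x
        = (2 - c * (2 * x) - c * (2 * x - c * (x ^ 2 + L))) * Real.exp (-(c * x)) := by
      rw [hderiv]
      exact (hasDerivAt_aux2 L x).deriv
    rw [show deriv^[2] (fun x : ℝ => (x ^ 2 + L) * Real.exp (-(c * x)))
        = deriv (deriv (fun x : ℝ => (x ^ 2 + L) * Real.exp (-(c * x)))) from rfl, h2]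
    have hexp : 0 < Real.exp (-(c * x)) := Real.exp_pos _
    have hl : (0.6931471803 : ℝ) < Real.log 2 := Real.log_two_gt_d9
    have hkey : 0 ≤ 2 - c * (2 * x) - c * (2 * x - c * (x ^ 2 + L)) := by
      rw [hc]
      nlinarith [sq_nonneg (Real.log 2 * x - 4), sq_nonneg (Real.log 2), hL,
        mul_le_mul_of_nonneg_left hL (sq_nonneg (Real.log 2))]
    positivity
end
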